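/- arXiv:2601.08986 — 2 statements merged into one kernel-verified Lean document; each statement's English description precedes it below -/
import Mathlib

section
/- Let Y = X + N where X ~ N(0, σ_X²) and N ~ N(0, σ_N²) are independent. Then for any interval (a,b) ⊂ ℝ, the pointwise maximal leakage satisfies ℓ(X → (a,b)) = log[(2Φ((b−a)/(2σ_N)) − 1)/(Φ(b/σ_Y) − Φ(a/σ_Y))], where σ_Y² = σ_X² + σ_N². -/
open Real Set MeasureTheory

/-- Standard normal density. -/
noncomputable def stdGaussPDF (x : ℝ) : ℝ := (Real.sqrt (2 * Real.pi))⁻¹ * Real.exp (-x ^ 2 / 2)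

/-- Standard normal CDF. -/
noncomputable def stdGaussCDF (x : ℝ) : ℝ := ∫ t in Set.Iic x, stdGaussPDF t

lemma pdf_eq (x : ℝ) : stdGaussPDF x = (Real.sqrt (2 * π))⁻¹ * Real.exp (-(1/2) * x ^ 2) := by
  unfold stdGaussPDF; ring_nf

lemma pdf_cont : Continuous stdGaussPDF := by
  unfold stdGaussPDF
  fun_prop

lemma pdf_integrable : Integrable stdGaussPDF := by
  have h := (integrable_exp_neg_mul_sq (b := 1/2) (by norm_num)).const_mul (Real.sqrt (2 * π))⁻¹
  have he : stdGaussPDF = fun x => (Real.sqrt (2 * π))⁻¹ * Real.exp (-(1/2) * x ^ 2) :=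
    funext pdf_eq
  rw [he]; exact h

lemma pdf_total : ∫ x, stdGaussPDF x = 1 := by
  have h : ∫ x : ℝ, Real.exp (-(1/2) * x ^ 2) = Real.sqrt (π / (1/2)) := integral_gaussian (1/2)
  have : ∫ x, stdGaussPDF x = (Real.sqrt (2 * π))⁻¹ * Real.sqrt (π / (1/2)) := by
    simp_rw [pdf_eq]
    rw [MeasureTheory.integral_const_mul, h]
  rw [this]
  have h2 : π / (1/2) = 2 * π := by ring
  rw [h2, inv_mul_cancel₀ (by positivity)]

lemma pdf_even (x : ℝ) : stdGaussPDF (-x) = stdGaussPDF x := by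
  unfold stdGaussPDF; ring_nf

lemma pdf_mono {u v : ℝ} (h : u ^ 2 ≤ v ^ 2) : stdGaussPDF v ≤ stdGaussPDF u := by
  unfold stdGaussPDF
  exact mul_le_mul_of_nonneg_left (Real.exp_le_exp.2 (by linarith)) (by positivity)

lemma cdf_deriv (x : ℝ) : HasDerivAt stdGaussCDF (stdGaussPDF x) x := by
  have key : ∀ y : ℝ, stdGaussCDF y = stdGaussCDF 0 + ∫ t in (0:ℝ)..y, stdGaussPDF t := by
    intro y
    have := intervalIntegral.integral_Iic_sub_Iic (μ := volume) (f := stdGaussPDF)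
      pdf_integrable.integrableOn pdf_integrable.integrableOn (a := 0) (b := y)
    unfold stdGaussCDF
    linarith [this]
  have hd : HasDerivAt (fun y => stdGaussCDF 0 + ∫ t in (0:ℝ)..y, stdGaussPDF t)
      (stdGaussPDF x) x := by
    have := intervalIntegral.integral_hasDerivAt_right
      (pdf_integrable.intervalIntegrable (a := 0) (b := x))
      (pdf_cont.stronglyMeasurableAtFilter _ _)
      pdf_cont.continuousAt
    exact (this.const_add _)
  exact hd.congr_deriv rfl |>.congr_of_eventuallyEq (by filter_upwards with y using (key y))

lemma cdf_neg (x : ℝ) : stdGaussCDF (-x) = 1 - stdGaussCDF x := by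
  have h1 : ∫ t in Ioi x, stdGaussPDF (-t) = ∫ t in Iic (-x), stdGaussPDF t :=
    integral_comp_neg_Ioi x stdGaussPDF
  have h2 : ∫ t in Ioi x, stdGaussPDF (-t) = ∫ t in Ioi x, stdGaussPDF t := by
    simp_rw [pdf_even]
  have h3 : stdGaussCDF x + ∫ t in Ioi x, stdGaussPDF t = 1 := by
    rw [← pdf_total]
    exact intervalIntegral.integral_Iic_add_Ioi pdf_integrable.integrableOn pdf_integrable.integrableOn
  unfold stdGaussCDF
  unfold stdGaussCDF at h3
  rw [← h1, h2]
  linarith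

/-- For the Gaussian mechanism `Y = X + N` with `X ~ N(0, σ_X²)`, `N ~ N(0, σ_N²)`
independent, the pointwise maximal leakage of an interval `(a,b)` is
`log[(2Φ((b−a)/(2σ_N)) − 1)/(Φ(b/σ_Y) − Φ(a/σ_Y))]`. Here the leakage is
`log (sup_x P(Y ∈ (a,b) | X = x) / P(Y ∈ (a,b)))`, where
`P(Y ∈ (a,b) | X = x) = Φ((b−x)/σ_N) − Φ((a−x)/σ_N)` and
`P(Y ∈ (a,b)) = Φ(b/σ_Y) − Φ(a/σ_Y)` with `σ_Y² = σ_X² + σ_N²`. -/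
theorem gaussian_interval_leakage (a b σX σN : ℝ) (hab : a < b)
    (hσX : 0 < σX) (hσN : 0 < σN) (σY : ℝ) (hσY : σY = Real.sqrt (σX ^ 2 + σN ^ 2)) :
    Real.log ((⨆ x : ℝ, (stdGaussCDF ((b - x) / σN) - stdGaussCDF ((a - x) / σN)))
        / (stdGaussCDF (b / σY) - stdGaussCDF (a / σY)))
      = Real.log ((2 * stdGaussCDF ((b - a) / (2 * σN)) - 1)
        / (stdGaussCDF (b / σY) - stdGaussCDF (a / σY))) := by
  have hσN' : σN ≠ 0 := ne_of_gt hσN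
  set m : ℝ := (a + b) / 2 with hm
  set f : ℝ → ℝ := fun x => stdGaussCDF ((b - x) / σN) - stdGaussCDF ((a - x) / σN) with hf
  have hderiv : ∀ x : ℝ, HasDerivAt f
      ((stdGaussPDF ((a - x) / σN) - stdGaussPDF ((b - x) / σN)) / σN) x := by
    intro x
    have h1 : HasDerivAt (fun y : ℝ => (b - y) / σN) (-1 / σN) x := by
      simpa using ((hasDerivAt_const x b).sub (hasDerivAt_id x)).div_const σN
    have h2 : HasDerivAt (fun y : ℝ => (a - y) / σN) (-1 / σN) x := by
      simpa using ((hasDerivAt_const x a).sub (hasDerivAt_id x)).div_const σN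
    have hb' := (cdf_deriv ((b - x) / σN)).comp x h1
    have ha' := (cdf_deriv ((a - x) / σN)).comp x h2
    have h := hb'.sub ha'
    simp only [Function.comp_def, Pi.sub_def] at h
    refine h.congr_deriv ?_
    ring
  have hcont : Continuous f := continuous_iff_continuousAt.2 fun x => (hderiv x).continuousAt
  have hderiv' : ∀ x : ℝ,
      deriv f x = (stdGaussPDF ((a - x) / σN) - stdGaussPDF ((b - x) / σN)) / σN :=
    fun x => (hderiv x).deriv
  have hmax : ∀ x, f x ≤ f m := by
    intro x
    rcases le_total x m with hx | hx
    · have hmono : MonotoneOn f (Iic m) := by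
        apply monotoneOn_of_deriv_nonneg (convex_Iic m) hcont.continuousOn
          (fun y _ => (hderiv y).differentiableAt.differentiableWithinAt)
        intro y hy
        rw [interior_Iic, mem_Iio] at hy
        rw [hderiv' y]
        apply div_nonneg _ hσN.le
        have hsq : ((a - y) / σN) ^ 2 ≤ ((b - y) / σN) ^ 2 := by
          rw [div_pow, div_pow]
          exact (div_le_div_iff_of_pos_right (by positivity)).2 (by nlinarith)
        linarith [pdf_mono hsq]
      exact hmono (mem_Iic.2 hx) (mem_Iic.2 le_rfl) hx
    · have hanti : AntitoneOn f (Ici m) := by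
        apply antitoneOn_of_deriv_nonpos (convex_Ici m) hcont.continuousOn
          (fun y _ => (hderiv y).differentiableAt.differentiableWithinAt)
        intro y hy
        rw [interior_Ici, mem_Ioi] at hy
        rw [hderiv' y]
        apply div_nonpos_of_nonpos_of_nonneg _ hσN.le
        have hsq : ((b - y) / σN) ^ 2 ≤ ((a - y) / σN) ^ 2 := by
          rw [div_pow, div_pow]
          exact (div_le_div_iff_of_pos_right (by positivity)).2 (by nlinarith)
        linarith [pdf_mono hsq]
      exact hanti (mem_Ici.2 le_rfl) (mem_Ici.2 hx) hx
  have hsup : (⨆ x : ℝ, f x) = f m :=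
    le_antisymm (ciSup_le hmax)
      (le_ciSup ⟨f m, by rintro y ⟨x, rfl⟩; exact hmax x⟩ m)
  have e1 : (b - m) / σN = (b - a) / (2 * σN) := by
    rw [hm]; field_simp; ring
  have e2 : (a - m) / σN = -((b - a) / (2 * σN)) := by
    rw [hm]; field_simp; ring
  have hfm : f m = 2 * stdGaussCDF ((b - a) / (2 * σN)) - 1 := by
    rw [hf]
    simp only
    rw [e1, e2, cdf_neg]
    ring
  rw [show (⨆ x : ℝ, (stdGaussCDF ((b - x) / σN) - stdGaussCDF ((a - x) / σN)))
      = 2 * stdGaussCDF ((b - a) / (2 * σN)) - 1 from hsup.trans hfm]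
end

section
/- Let Y = X + N where N ~ N(0, σ_N²) is independent of X, X having a density f_X. Then for every fixed x in the support of P_X, the information density y ↦ i(x; y) = log(f_{Y|X=x}(y)/f_Y(y)) is strictly concave in y, with second derivative ∂²/∂y² i(x;y) = −Var[X | Y = y]/σ_N⁴ < 0. -/
open Real Set MeasureTheory Filter

/-- Gaussian conditional density `f_{Y|X=x}(y)` for the mechanism `Y = X + N`. -/
noncomputable def condPDF (σN x y : ℝ) : ℝ := (1 / σN) * stdGaussPDF ((y - x) / σN)

lemma aux_abs_mul_exp (u : ℝ) : |u| * Real.exp (-u ^ 2 / 2) ≤ 1 := by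
  have h := Real.add_one_le_exp (u ^ 2 / 2)
  have h2 : Real.exp (-u ^ 2 / 2) = (Real.exp (u ^ 2 / 2))⁻¹ := by
    rw [← Real.exp_neg]; ring_nf
  rw [h2, mul_inv_le_iff₀ (Real.exp_pos _)]
  nlinarith [sq_nonneg (|u| - 1), sq_abs u]

lemma aux_sq_mul_exp (u : ℝ) : u ^ 2 * Real.exp (-u ^ 2 / 2) ≤ 2 := by
  have h := Real.add_one_le_exp (u ^ 2 / 2)
  have h2 : Real.exp (-u ^ 2 / 2) = (Real.exp (u ^ 2 / 2))⁻¹ := by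
    rw [← Real.exp_neg]; ring_nf
  rw [h2, mul_inv_le_iff₀ (Real.exp_pos _)]
  nlinarith

lemma condPDF_pos {σ : ℝ} (hσ : 0 < σ) (t y : ℝ) : 0 < condPDF σ t y := by
  unfold condPDF stdGaussPDF
  have : 0 < Real.sqrt (2 * Real.pi) := Real.sqrt_pos.2 (by positivity)
  positivity

lemma condPDF_le {σ : ℝ} (hσ : 0 < σ) (t y : ℝ) :
    condPDF σ t y ≤ (σ * Real.sqrt (2 * Real.pi))⁻¹ := by
  unfold condPDF stdGaussPDF
  have hs : 0 < Real.sqrt (2 * Real.pi) := Real.sqrt_pos.2 (by positivity)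
  have he : Real.exp (-((y - t) / σ) ^ 2 / 2) ≤ 1 := by
    apply Real.exp_le_one_iff.2
    have : (0:ℝ) ≤ ((y - t) / σ) ^ 2 / 2 := by positivity
    linarith
  rw [mul_inv]
  calc 1 / σ * ((√(2 * π))⁻¹ * Real.exp (-((y - t) / σ) ^ 2 / 2))
      ≤ 1 / σ * ((√(2 * π))⁻¹ * 1) := by
        apply mul_le_mul_of_nonneg_left _ (by positivity)
        exact mul_le_mul_of_nonneg_left he (by positivity)
    _ = σ⁻¹ * (√(2 * π))⁻¹ := by ring
  
lemma condPDF_hasDerivAt {σ : ℝ} (hσ : 0 < σ) (t y : ℝ) :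
    HasDerivAt (fun y => condPDF σ t y) (condPDF σ t y * ((t - y) / σ ^ 2)) y := by
  have h1 : HasDerivAt (fun y : ℝ => (y - t) / σ) (1 / σ) y := by
    simpa using ((hasDerivAt_id y).sub_const t).div_const σ
  have h2 : HasDerivAt (fun y : ℝ => -((y - t) / σ) ^ 2 / 2)
      (-(((y - t) / σ) * (1 / σ))) y := by
    have := (h1.pow 2).neg.div_const 2
    exact this.congr_deriv (by ring)
  have h3 := h2.exp
  have h4 := (h3.const_mul ((Real.sqrt (2 * Real.pi))⁻¹)).const_mul (1 / σ)
  have heq : condPDF σ t y * ((t - y) / σ ^ 2)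
      = 1 / σ * ((Real.sqrt (2 * Real.pi))⁻¹ *
        (Real.exp (-((y - t) / σ) ^ 2 / 2) * -((y - t) / σ * (1 / σ)))) := by
    have hne : σ ≠ 0 := ne_of_gt hσ
    have h5 : -((y - t) / σ * (1 / σ)) = (t - y) / σ ^ 2 := by
      ring
    rw [h5]
    unfold condPDF stdGaussPDF
    ring
  rw [heq]
  exact h4

lemma condPDF_hasDerivAt2 {σ : ℝ} (hσ : 0 < σ) (t y : ℝ) :
    HasDerivAt (fun y => condPDF σ t y * ((t - y) / σ ^ 2))
      (condPDF σ t y * (((t - y) / σ ^ 2) ^ 2 - 1 / σ ^ 2)) y := by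
  have hlin : HasDerivAt (fun y : ℝ => (t - y) / σ ^ 2) (-(1 / σ ^ 2)) y := by
    have := ((hasDerivAt_id y).const_sub t).div_const (σ ^ 2)
    exact this.congr_deriv (by ring)
  have := (condPDF_hasDerivAt hσ t y).mul hlin
  exact this.congr_deriv (by ring)

lemma condPDF_deriv_bound {σ : ℝ} (hσ : 0 < σ) (t y : ℝ) :
    |condPDF σ t y * ((t - y) / σ ^ 2)| ≤ (Real.sqrt (2 * Real.pi))⁻¹ * (σ ^ 2)⁻¹ := by
  have hs : 0 < Real.sqrt (2 * Real.pi) := Real.sqrt_pos.2 (by positivity)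
  have hne : σ ≠ 0 := ne_of_gt hσ
  set u := (y - t) / σ with hu
  have ht : t - y = -(u * σ) := by rw [hu, div_mul_cancel₀ _ hne]; ring
  have key : ∀ v E c : ℝ, 1 / σ * (c * E) * (-(v * σ) / σ ^ 2) = -(c * (σ ^ 2)⁻¹ * (v * E)) := by
    intro v E c; field_simp
  have h1 : condPDF σ t y * ((t - y) / σ ^ 2)
      = -((Real.sqrt (2 * Real.pi))⁻¹ * (σ ^ 2)⁻¹ * (u * Real.exp (-u ^ 2 / 2))) := by
    unfold condPDF stdGaussPDF
    rw [ht]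
    exact key u _ _
  rw [h1, abs_neg, abs_mul]
  have h3 : |(Real.sqrt (2 * Real.pi))⁻¹ * (σ ^ 2)⁻¹| = (Real.sqrt (2 * Real.pi))⁻¹ * (σ ^ 2)⁻¹ :=
    abs_of_nonneg (by positivity)
  have h2 : |u * Real.exp (-u ^ 2 / 2)| = |u| * Real.exp (-u ^ 2 / 2) := by
    rw [abs_mul, abs_of_pos (Real.exp_pos _)]
  rw [h3, h2]
  calc (Real.sqrt (2 * Real.pi))⁻¹ * (σ ^ 2)⁻¹ * (|u| * Real.exp (-u ^ 2 / 2))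
      ≤ (Real.sqrt (2 * Real.pi))⁻¹ * (σ ^ 2)⁻¹ * 1 :=
        mul_le_mul_of_nonneg_left (aux_abs_mul_exp u) (by positivity)
    _ = (Real.sqrt (2 * Real.pi))⁻¹ * (σ ^ 2)⁻¹ := mul_one _

lemma condPDF_deriv2_bound {σ : ℝ} (hσ : 0 < σ) (t y : ℝ) :
    |condPDF σ t y * (((t - y) / σ ^ 2) ^ 2 - 1 / σ ^ 2)|
      ≤ (Real.sqrt (2 * Real.pi))⁻¹ * (σ ^ 3)⁻¹ * 3 := by
  have hs : 0 < Real.sqrt (2 * Real.pi) := Real.sqrt_pos.2 (by positivity)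
  have hne : σ ≠ 0 := ne_of_gt hσ
  set u := (y - t) / σ with hu
  have ht : t - y = -(u * σ) := by rw [hu, div_mul_cancel₀ _ hne]; ring
  have key : ∀ v E c : ℝ, 1 / σ * (c * E) * ((-(v * σ) / σ ^ 2) ^ 2 - 1 / σ ^ 2)
      = c * (σ ^ 3)⁻¹ * ((v ^ 2 - 1) * E) := by
    intro v E c; field_simp
  have h1 : condPDF σ t y * (((t - y) / σ ^ 2) ^ 2 - 1 / σ ^ 2)
      = (Real.sqrt (2 * Real.pi))⁻¹ * (σ ^ 3)⁻¹ * ((u ^ 2 - 1) * Real.exp (-u ^ 2 / 2)) := by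
    unfold condPDF stdGaussPDF
    rw [ht]
    exact key u _ _
  rw [h1, abs_mul]
  have h3 : |(Real.sqrt (2 * Real.pi))⁻¹ * (σ ^ 3)⁻¹| = (Real.sqrt (2 * Real.pi))⁻¹ * (σ ^ 3)⁻¹ :=
    abs_of_nonneg (by positivity)
  rw [h3]
  apply mul_le_mul_of_nonneg_left _ (by positivity)
  have h2 : |(u ^ 2 - 1) * Real.exp (-u ^ 2 / 2)| ≤ (u ^ 2 + 1) * Real.exp (-u ^ 2 / 2) := by
    rw [abs_mul, abs_of_pos (Real.exp_pos _)]
    apply mul_le_mul_of_nonneg_right _ (Real.exp_pos _).le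
    rw [abs_sub_le_iff]
    constructor <;> nlinarith [sq_nonneg u, abs_nonneg u]
  refine h2.trans ?_
  have e1 := aux_sq_mul_exp u
  have e2 : Real.exp (-u ^ 2 / 2) ≤ 1 := by
    apply Real.exp_le_one_iff.2
    nlinarith [sq_nonneg u]
  nlinarith [Real.exp_pos (-u ^ 2 / 2)]
lemma condPDF_abs_bound {σ : ℝ} (hσ : 0 < σ) (t y : ℝ) :
    |t - y| * condPDF σ t y ≤ (Real.sqrt (2 * Real.pi))⁻¹ := by
  have hs : 0 < Real.sqrt (2 * Real.pi) := Real.sqrt_pos.2 (by positivity)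
  have hne : σ ≠ 0 := ne_of_gt hσ
  set u := (y - t) / σ with hu
  have ht : t - y = -(u * σ) := by rw [hu, div_mul_cancel₀ _ hne]; ring
  have key : ∀ v E c : ℝ, v * σ * (1 / σ * (c * E)) = c * (v * E) := by
    intro v E c; field_simp
  have h1 : |t - y| * condPDF σ t y
      = (Real.sqrt (2 * Real.pi))⁻¹ * (|u| * Real.exp (-u ^ 2 / 2)) := by
    have habs : |t - y| = |u| * σ := by
      rw [ht, abs_neg, abs_mul, abs_of_pos hσ]
    unfold condPDF stdGaussPDF
    rw [habs]
    exact key |u| _ _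
  rw [h1]
  calc (Real.sqrt (2 * Real.pi))⁻¹ * (|u| * Real.exp (-u ^ 2 / 2))
      ≤ (Real.sqrt (2 * Real.pi))⁻¹ * 1 :=
        mul_le_mul_of_nonneg_left (aux_abs_mul_exp u) (by positivity)
    _ = (Real.sqrt (2 * Real.pi))⁻¹ := mul_one _

lemma condPDF_sq_bound {σ : ℝ} (hσ : 0 < σ) (t y : ℝ) :
    (t - y) ^ 2 * condPDF σ t y ≤ (Real.sqrt (2 * Real.pi))⁻¹ * (2 * σ) := by
  have hs : 0 < Real.sqrt (2 * Real.pi) := Real.sqrt_pos.2 (by positivity)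
  have hne : σ ≠ 0 := ne_of_gt hσ
  set u := (y - t) / σ with hu
  have ht : t - y = -(u * σ) := by rw [hu, div_mul_cancel₀ _ hne]; ring
  have key : ∀ v E c : ℝ, (-(v * σ)) ^ 2 * (1 / σ * (c * E)) = c * σ * (v ^ 2 * E) := by
    intro v E c; field_simp
  have h1 : (t - y) ^ 2 * condPDF σ t y
      = (Real.sqrt (2 * Real.pi))⁻¹ * σ * (u ^ 2 * Real.exp (-u ^ 2 / 2)) := by
    unfold condPDF stdGaussPDF
    rw [ht]
    exact key u _ _
  rw [h1]
  calc (Real.sqrt (2 * Real.pi))⁻¹ * σ * (u ^ 2 * Real.exp (-u ^ 2 / 2))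
      ≤ (Real.sqrt (2 * Real.pi))⁻¹ * σ * 2 :=
        mul_le_mul_of_nonneg_left (aux_sq_mul_exp u) (by positivity)
    _ = (Real.sqrt (2 * Real.pi))⁻¹ * (2 * σ) := by ring


/-- Marginal density of `Y = X + N`. -/
noncomputable def margPDF (σN : ℝ) (fX : ℝ → ℝ) (y : ℝ) : ℝ := ∫ x, fX x * condPDF σN x y

/-- Posterior mean `E[X | Y = y]`. -/
noncomputable def postMean (σN : ℝ) (fX : ℝ → ℝ) (y : ℝ) : ℝ :=
  (∫ x, x * fX x * condPDF σN x y) / margPDF σN fX y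

/-- Posterior variance `Var[X | Y = y]`. -/
noncomputable def postVar (σN : ℝ) (fX : ℝ → ℝ) (y : ℝ) : ℝ :=
  (∫ x, (x - postMean σN fX y) ^ 2 * fX x * condPDF σN x y) / margPDF σN fX y

/-- For the Gaussian mechanism, the information density `y ↦ i(x;y)` is strictly concave
for every `x` in the support of `P_X`, and its second derivative equals
`−Var[X|Y=y]/σ_N⁴ < 0`. -/
theorem info_density_strictly_concave (σN : ℝ) (hσN : 0 < σN) (fX : ℝ → ℝ)
    (hmeas : Measurable fX) (hnn : ∀ x, 0 ≤ fX x) (hint : ∫ x, fX x = 1)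
    (x : ℝ) (hx : 0 < fX x) :
    StrictConcaveOn ℝ Set.univ (fun y => Real.log (condPDF σN x y / margPDF σN fX y)) ∧
    ∀ y : ℝ,
      deriv (deriv (fun y => Real.log (condPDF σN x y / margPDF σN fX y))) y
        = -(postVar σN fX y) / σN ^ 4 ∧
      0 < postVar σN fX y := by
  have hne : σN ≠ 0 := ne_of_gt hσN
  have hs : 0 < Real.sqrt (2 * Real.pi) := Real.sqrt_pos.2 (by positivity)
  have hfX : Integrable fX := by
    by_contra h
    rw [MeasureTheory.integral_undef h] at hint
    norm_num at hint
  have hcont : ∀ y : ℝ, Continuous fun t => condPDF σN t y := by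
    intro y; unfold condPDF stdGaussPDF; fun_prop
  have hcont2 : ∀ y : ℝ, Continuous fun t : ℝ => condPDF σN t y * ((t - y) / σN ^ 2) :=
    fun y => (hcont y).mul (by fun_prop)
  have hcont3 : ∀ y : ℝ,
      Continuous fun t : ℝ => condPDF σN t y * (((t - y) / σN ^ 2) ^ 2 - 1 / σN ^ 2) :=
    fun y => (hcont y).mul (by fun_prop)
  have asm : ∀ y : ℝ, AEStronglyMeasurable (fun t => fX t * condPDF σN t y) volume := fun y =>
    (hmeas.mul (hcont y).measurable).aestronglyMeasurable
  -- integrability of the basic moments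
  have int0 : ∀ y : ℝ, Integrable fun t => fX t * condPDF σN t y := by
    intro y
    refine Integrable.mono' (hfX.const_mul ((σN * Real.sqrt (2 * Real.pi))⁻¹)) (asm y) ?_
    refine ae_of_all _ fun t => ?_
    rw [Real.norm_eq_abs, abs_mul, abs_of_nonneg (hnn t), abs_of_pos (condPDF_pos hσN t _)]
    calc fX t * condPDF σN t y ≤ fX t * (σN * Real.sqrt (2 * Real.pi))⁻¹ :=
          mul_le_mul_of_nonneg_left (condPDF_le hσN t y) (hnn t)
      _ = (σN * Real.sqrt (2 * Real.pi))⁻¹ * fX t := mul_comm _ _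
  have int1 : ∀ y : ℝ, Integrable fun t => t * fX t * condPDF σN t y := by
    intro y
    refine Integrable.mono'
      (hfX.const_mul ((Real.sqrt (2 * Real.pi))⁻¹ + |y| * (σN * Real.sqrt (2 * Real.pi))⁻¹))
      (((measurable_id.mul hmeas).mul (hcont y).measurable).aestronglyMeasurable) ?_
    refine ae_of_all _ fun t => ?_
    rw [Real.norm_eq_abs, abs_mul, abs_mul, abs_of_nonneg (hnn t),
      abs_of_pos (condPDF_pos hσN t _)]
    have h1 : |t| ≤ |t - y| + |y| := by
      calc |t| = |(t - y) + y| := by ring_nf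
        _ ≤ |t - y| + |y| := abs_add_le _ _
    have h2 : |t| * condPDF σN t y
        ≤ (Real.sqrt (2 * Real.pi))⁻¹ + |y| * (σN * Real.sqrt (2 * Real.pi))⁻¹ := by
      calc |t| * condPDF σN t y ≤ (|t - y| + |y|) * condPDF σN t y :=
            mul_le_mul_of_nonneg_right h1 (condPDF_pos hσN t y).le
        _ = |t - y| * condPDF σN t y + |y| * condPDF σN t y := by ring
        _ ≤ (Real.sqrt (2 * Real.pi))⁻¹ + |y| * (σN * Real.sqrt (2 * Real.pi))⁻¹ :=
            add_le_add (condPDF_abs_bound hσN t y)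
              (mul_le_mul_of_nonneg_left (condPDF_le hσN t y) (abs_nonneg y))
    calc |t| * fX t * condPDF σN t y = fX t * (|t| * condPDF σN t y) := by ring
      _ ≤ fX t * ((Real.sqrt (2 * Real.pi))⁻¹ + |y| * (σN * Real.sqrt (2 * Real.pi))⁻¹) :=
          mul_le_mul_of_nonneg_left h2 (hnn t)
      _ = ((Real.sqrt (2 * Real.pi))⁻¹ + |y| * (σN * Real.sqrt (2 * Real.pi))⁻¹) * fX t :=
          mul_comm _ _
  have int2 : ∀ y : ℝ, Integrable fun t => t ^ 2 * fX t * condPDF σN t y := by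
    intro y
    refine Integrable.mono'
      (hfX.const_mul (2 * ((Real.sqrt (2 * Real.pi))⁻¹ * (2 * σN))
        + 2 * y ^ 2 * (σN * Real.sqrt (2 * Real.pi))⁻¹))
      ((((measurable_id.pow_const 2).mul hmeas).mul (hcont y).measurable).aestronglyMeasurable) ?_
    refine ae_of_all _ fun t => ?_
    rw [Real.norm_eq_abs, abs_mul, abs_mul, abs_of_nonneg (hnn t),
      abs_of_pos (condPDF_pos hσN t _), abs_of_nonneg (sq_nonneg t)]
    have h1 : t ^ 2 ≤ 2 * (t - y) ^ 2 + 2 * y ^ 2 := by nlinarith [sq_nonneg (t - y - y)]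
    have h2 : t ^ 2 * condPDF σN t y
        ≤ 2 * ((Real.sqrt (2 * Real.pi))⁻¹ * (2 * σN))
          + 2 * y ^ 2 * (σN * Real.sqrt (2 * Real.pi))⁻¹ := by
      calc t ^ 2 * condPDF σN t y ≤ (2 * (t - y) ^ 2 + 2 * y ^ 2) * condPDF σN t y :=
            mul_le_mul_of_nonneg_right h1 (condPDF_pos hσN t y).le
        _ = 2 * ((t - y) ^ 2 * condPDF σN t y) + 2 * y ^ 2 * condPDF σN t y := by ring
        _ ≤ 2 * ((Real.sqrt (2 * Real.pi))⁻¹ * (2 * σN))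
            + 2 * y ^ 2 * (σN * Real.sqrt (2 * Real.pi))⁻¹ := by
            refine add_le_add ?_ ?_
            · exact mul_le_mul_of_nonneg_left (condPDF_sq_bound hσN t y) (by norm_num)
            · exact mul_le_mul_of_nonneg_left (condPDF_le hσN t y) (by positivity)
    calc t ^ 2 * fX t * condPDF σN t y = fX t * (t ^ 2 * condPDF σN t y) := by ring
      _ ≤ fX t * (2 * ((Real.sqrt (2 * Real.pi))⁻¹ * (2 * σN))
            + 2 * y ^ 2 * (σN * Real.sqrt (2 * Real.pi))⁻¹) :=
          mul_le_mul_of_nonneg_left h2 (hnn t)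
      _ = _ := mul_comm _ _
  -- positivity of the marginal
  have hsupp_pos : 0 < volume (Function.support fX) := by
    by_contra h
    push_neg at h
    have hz : volume (Function.support fX) = 0 := le_antisymm h zero_le
    have hae : fX =ᵐ[volume] 0 := by
      rw [Filter.EventuallyEq, ae_iff]
      simpa [Function.support, Ne] using hz
    rw [MeasureTheory.integral_eq_zero_of_ae hae] at hint
    norm_num at hint
  have gpos : ∀ y : ℝ, 0 < margPDF σN fX y := by
    intro y
    have hnnf : 0 ≤ fun t => fX t * condPDF σN t y :=
      fun t => mul_nonneg (hnn t) (condPDF_pos hσN t y).le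
    have := (MeasureTheory.integral_pos_iff_support_of_nonneg hnnf (int0 y)).2
    refine this ?_
    refine lt_of_lt_of_le hsupp_pos (measure_mono ?_)
    intro t ht
    simp only [Function.mem_support] at ht ⊢
    exact mul_ne_zero ht (condPDF_pos hσN t y).ne'
  -- first differentiation under the integral
  have H1 : ∀ y₀ : ℝ,
      Integrable (fun t => fX t * (condPDF σN t y₀ * ((t - y₀) / σN ^ 2))) ∧
      HasDerivAt (margPDF σN fX)
        (∫ t, fX t * (condPDF σN t y₀ * ((t - y₀) / σN ^ 2))) y₀ := by
    intro y₀
    have key := hasDerivAt_integral_of_dominated_loc_of_deriv_le (μ := volume) (x₀ := y₀)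
      (F := fun y t => fX t * condPDF σN t y)
      (F' := fun y t => fX t * (condPDF σN t y * ((t - y) / σN ^ 2)))
      (bound := fun t => (Real.sqrt (2 * Real.pi))⁻¹ * (σN ^ 2)⁻¹ * fX t)
      (Metric.ball_mem_nhds y₀ one_pos) (Filter.Eventually.of_forall fun y => asm y) (int0 y₀)
      ((hmeas.mul (hcont2 y₀).measurable).aestronglyMeasurable)
      (ae_of_all _ fun t y _ => by
        rw [Real.norm_eq_abs, abs_mul, abs_of_nonneg (hnn t)]
        calc fX t * |condPDF σN t y * ((t - y) / σN ^ 2)|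
            ≤ fX t * ((Real.sqrt (2 * Real.pi))⁻¹ * (σN ^ 2)⁻¹) :=
              mul_le_mul_of_nonneg_left (condPDF_deriv_bound hσN t y) (hnn t)
          _ = (Real.sqrt (2 * Real.pi))⁻¹ * (σN ^ 2)⁻¹ * fX t := mul_comm _ _)
      (hfX.const_mul _)
      (ae_of_all _ fun t y _ => (condPDF_hasDerivAt hσN t y).const_mul (fX t))
    exact ⟨key.1, key.2⟩
  -- second differentiation under the integral
  have H2 : ∀ y₀ : ℝ,
      Integrable (fun t => fX t * (condPDF σN t y₀ * (((t - y₀) / σN ^ 2) ^ 2 - 1 / σN ^ 2))) ∧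
      HasDerivAt (fun y => ∫ t, fX t * (condPDF σN t y * ((t - y) / σN ^ 2)))
        (∫ t, fX t * (condPDF σN t y₀ * (((t - y₀) / σN ^ 2) ^ 2 - 1 / σN ^ 2))) y₀ := by
    intro y₀
    have key := hasDerivAt_integral_of_dominated_loc_of_deriv_le (μ := volume) (x₀ := y₀)
      (F := fun y t => fX t * (condPDF σN t y * ((t - y) / σN ^ 2)))
      (F' := fun y t => fX t * (condPDF σN t y * (((t - y) / σN ^ 2) ^ 2 - 1 / σN ^ 2)))
      (bound := fun t => (Real.sqrt (2 * Real.pi))⁻¹ * (σN ^ 3)⁻¹ * 3 * fX t)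
      (Metric.ball_mem_nhds y₀ one_pos)
      (Filter.Eventually.of_forall fun y =>
        (hmeas.mul (hcont2 y).measurable).aestronglyMeasurable)
      (H1 y₀).1
      ((hmeas.mul (hcont3 y₀).measurable).aestronglyMeasurable)
      (ae_of_all _ fun t y _ => by
        rw [Real.norm_eq_abs, abs_mul, abs_of_nonneg (hnn t)]
        calc fX t * |condPDF σN t y * (((t - y) / σN ^ 2) ^ 2 - 1 / σN ^ 2)|
            ≤ fX t * ((Real.sqrt (2 * Real.pi))⁻¹ * (σN ^ 3)⁻¹ * 3) :=
              mul_le_mul_of_nonneg_left (condPDF_deriv2_bound hσN t y) (hnn t)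
          _ = (Real.sqrt (2 * Real.pi))⁻¹ * (σN ^ 3)⁻¹ * 3 * fX t := mul_comm _ _)
      (hfX.const_mul _)
      (ae_of_all _ fun t y _ => (condPDF_hasDerivAt2 hσN t y).const_mul (fX t))
    exact ⟨key.1, key.2⟩
  -- closed forms for the integrals
  have valG1 : ∀ y : ℝ,
      (∫ t, fX t * (condPDF σN t y * ((t - y) / σN ^ 2)))
        = (1 / σN ^ 2) * (∫ t, t * fX t * condPDF σN t y)
          - (y / σN ^ 2) * margPDF σN fX y := by
    intro y
    have e1 : (fun t => fX t * (condPDF σN t y * ((t - y) / σN ^ 2)))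
        = fun t => (1 / σN ^ 2) * (t * fX t * condPDF σN t y)
            - (y / σN ^ 2) * (fX t * condPDF σN t y) := by
      funext t; ring
    have iA : Integrable (fun t => (1 / σN ^ 2) * (t * fX t * condPDF σN t y)) volume :=
      (int1 y).const_mul _
    have iB : Integrable (fun t => (y / σN ^ 2) * (fX t * condPDF σN t y)) volume :=
      (int0 y).const_mul _
    rw [e1, MeasureTheory.integral_sub iA iB,
      MeasureTheory.integral_const_mul, MeasureTheory.integral_const_mul]
    rfl
  have valG2 : ∀ y : ℝ,
      (∫ t, fX t * (condPDF σN t y * (((t - y) / σN ^ 2) ^ 2 - 1 / σN ^ 2)))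
        = (1 / σN ^ 4) * (∫ t, t ^ 2 * fX t * condPDF σN t y)
          - (2 * y / σN ^ 4) * (∫ t, t * fX t * condPDF σN t y)
          + (y ^ 2 / σN ^ 4 - 1 / σN ^ 2) * margPDF σN fX y := by
    intro y
    have e2 : (fun t => fX t * (condPDF σN t y * (((t - y) / σN ^ 2) ^ 2 - 1 / σN ^ 2)))
        = fun t => (1 / σN ^ 4) * (t ^ 2 * fX t * condPDF σN t y)
            - (2 * y / σN ^ 4) * (t * fX t * condPDF σN t y)
            + (y ^ 2 / σN ^ 4 - 1 / σN ^ 2) * (fX t * condPDF σN t y) := by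
      funext t; ring
    have iA : Integrable (fun t => (1 / σN ^ 4) * (t ^ 2 * fX t * condPDF σN t y)) volume :=
      (int2 y).const_mul _
    have iB : Integrable (fun t => (2 * y / σN ^ 4) * (t * fX t * condPDF σN t y)) volume :=
      (int1 y).const_mul _
    have iC : Integrable (fun t => (y ^ 2 / σN ^ 4 - 1 / σN ^ 2) * (fX t * condPDF σN t y))
        volume := (int0 y).const_mul _
    have iAB : Integrable (fun t => (1 / σN ^ 4) * (t ^ 2 * fX t * condPDF σN t y)
        - (2 * y / σN ^ 4) * (t * fX t * condPDF σN t y)) volume := iA.sub iB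
    rw [e2, MeasureTheory.integral_add iAB iC, MeasureTheory.integral_sub iA iB,
      MeasureTheory.integral_const_mul, MeasureTheory.integral_const_mul,
      MeasureTheory.integral_const_mul]
    rfl
  -- derivative of the information density
  have hcx : ∀ y : ℝ, 0 < condPDF σN x y := fun y => condPDF_pos hσN x y
  have ieq : (fun y => Real.log (condPDF σN x y / margPDF σN fX y))
      = fun y => Real.log (condPDF σN x y) - Real.log (margPDF σN fX y) := by
    funext y; rw [Real.log_div (hcx y).ne' (gpos y).ne']
  have hd1 : ∀ y : ℝ, HasDerivAt (fun y => Real.log (condPDF σN x y / margPDF σN fX y))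
      ((x - y) / σN ^ 2
        - (∫ t, fX t * (condPDF σN t y * ((t - y) / σN ^ 2))) / margPDF σN fX y) y := by
    intro y
    rw [ieq]
    have ha : HasDerivAt (fun y => Real.log (condPDF σN x y)) ((x - y) / σN ^ 2) y := by
      have h := ((condPDF_hasDerivAt hσN x y).log (hcx y).ne')
      convert h using 1
      rw [mul_comm, mul_div_assoc, div_self (hcx y).ne', mul_one]
    exact ha.sub ((H1 y).2.log (gpos y).ne')
  have hderiv1 : deriv (fun y => Real.log (condPDF σN x y / margPDF σN fX y))
      = fun y => (x - y) / σN ^ 2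
          - (∫ t, fX t * (condPDF σN t y * ((t - y) / σN ^ 2))) / margPDF σN fX y :=
    funext fun y => (hd1 y).deriv
  have hd2 : ∀ y : ℝ, HasDerivAt
      (fun y => (x - y) / σN ^ 2
        - (∫ t, fX t * (condPDF σN t y * ((t - y) / σN ^ 2))) / margPDF σN fX y)
      (-(1 / σN ^ 2)
        - ((∫ t, fX t * (condPDF σN t y * (((t - y) / σN ^ 2) ^ 2 - 1 / σN ^ 2)))
              * margPDF σN fX y
            - (∫ t, fX t * (condPDF σN t y * ((t - y) / σN ^ 2)))
              * (∫ t, fX t * (condPDF σN t y * ((t - y) / σN ^ 2))))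
          / margPDF σN fX y ^ 2) y := by
    intro y
    have ha : HasDerivAt (fun y : ℝ => (x - y) / σN ^ 2) (-(1 / σN ^ 2)) y := by
      have h := ((hasDerivAt_id y).const_sub x).div_const (σN ^ 2)
      exact h.congr_deriv (by ring)
    exact ha.sub (((H2 y).2).div ((H1 y).2) (gpos y).ne')
  -- integrability and value of the posterior-variance numerator
  have intV : ∀ y : ℝ,
      Integrable fun t => (t - postMean σN fX y) ^ 2 * fX t * condPDF σN t y := by
    intro y
    have e3 : (fun t => (t - postMean σN fX y) ^ 2 * fX t * condPDF σN t y)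
        = fun t => t ^ 2 * fX t * condPDF σN t y
            - (2 * postMean σN fX y) * (t * fX t * condPDF σN t y)
            + (postMean σN fX y ^ 2) * (fX t * condPDF σN t y) := by
      funext t; ring
    rw [e3]
    exact ((int2 y).sub ((int1 y).const_mul _)).add ((int0 y).const_mul _)
  have valV : ∀ y : ℝ,
      (∫ t, (t - postMean σN fX y) ^ 2 * fX t * condPDF σN t y)
        = (∫ t, t ^ 2 * fX t * condPDF σN t y)
          - 2 * postMean σN fX y * (∫ t, t * fX t * condPDF σN t y)
          + postMean σN fX y ^ 2 * margPDF σN fX y := by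
    intro y
    have e3 : (fun t => (t - postMean σN fX y) ^ 2 * fX t * condPDF σN t y)
        = fun t => t ^ 2 * fX t * condPDF σN t y
            - (2 * postMean σN fX y) * (t * fX t * condPDF σN t y)
            + (postMean σN fX y ^ 2) * (fX t * condPDF σN t y) := by
      funext t; ring
    have iB : Integrable (fun t => (2 * postMean σN fX y) * (t * fX t * condPDF σN t y))
        volume := (int1 y).const_mul _
    have iC : Integrable (fun t => (postMean σN fX y ^ 2) * (fX t * condPDF σN t y)) volume :=
      (int0 y).const_mul _
    have iAB : Integrable (fun t => t ^ 2 * fX t * condPDF σN t y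
        - (2 * postMean σN fX y) * (t * fX t * condPDF σN t y)) volume := (int2 y).sub iB
    rw [e3, MeasureTheory.integral_add iAB iC,
      MeasureTheory.integral_sub (int2 y) iB,
      MeasureTheory.integral_const_mul, MeasureTheory.integral_const_mul]
    rfl
  -- positivity of the posterior variance
  have hVpos : ∀ y : ℝ, 0 < postVar σN fX y := by
    intro y
    have hnnf : 0 ≤ fun t => (t - postMean σN fX y) ^ 2 * fX t * condPDF σN t y :=
      fun t => mul_nonneg (mul_nonneg (sq_nonneg _) (hnn t)) (condPDF_pos hσN t y).le
    have hnum : 0 < ∫ t, (t - postMean σN fX y) ^ 2 * fX t * condPDF σN t y := by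
      refine (MeasureTheory.integral_pos_iff_support_of_nonneg hnnf (intV y)).2 ?_
      have hsub : Function.support fX \ {postMean σN fX y}
          ⊆ Function.support fun t => (t - postMean σN fX y) ^ 2 * fX t * condPDF σN t y := by
        rintro t ⟨ht, ht2⟩
        simp only [Function.mem_support] at ht ⊢
        have htne : t - postMean σN fX y ≠ 0 := sub_ne_zero.2 (by simpa using ht2)
        exact mul_ne_zero (mul_ne_zero (pow_ne_zero 2 htne) ht) (condPDF_pos hσN t y).ne'
      refine lt_of_lt_of_le ?_ (measure_mono hsub)
      rw [measure_diff_null (measure_singleton _)]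
      exact hsupp_pos
    exact div_pos hnum (gpos y)
  -- the key second-derivative computation
  have key : ∀ y : ℝ,
      deriv (deriv (fun y => Real.log (condPDF σN x y / margPDF σN fX y))) y
        = -(postVar σN fX y) / σN ^ 4 ∧ 0 < postVar σN fX y := by
    intro y
    refine ⟨?_, hVpos y⟩
    rw [hderiv1, (hd2 y).deriv, valG1 y, valG2 y]
    have hunfold : postVar σN fX y
        = ((∫ t, t ^ 2 * fX t * condPDF σN t y)
            - 2 * postMean σN fX y * (∫ t, t * fX t * condPDF σN t y)
            + postMean σN fX y ^ 2 * margPDF σN fX y) / margPDF σN fX y := by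
      unfold postVar
      rw [valV y]
    rw [hunfold]
    have hmean : postMean σN fX y
        = (∫ t, t * fX t * condPDF σN t y) / margPDF σN fX y := rfl
    rw [hmean]
    have ha : margPDF σN fX y ≠ 0 := (gpos y).ne'
    field_simp
    ring
  refine ⟨?_, key⟩
  refine strictConcaveOn_of_deriv2_neg convex_univ ?_ ?_
  · exact (continuous_iff_continuousAt.2 fun y =>
      (hd1 y).differentiableAt.continuousAt).continuousOn
  · intro y _
    have h2 : deriv^[2] (fun y => Real.log (condPDF σN x y / margPDF σN fX y)) y
        = deriv (deriv (fun y => Real.log (condPDF σN x y / margPDF σN fX y))) y := by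
      simp [Function.iterate_succ_apply']
    rw [h2, (key y).1]
    have := (key y).2
    have h4 : (0:ℝ) < σN ^ 4 := by positivity
    exact div_neg_of_neg_of_pos (neg_lt_zero.2 this) h4
end
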